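/- arXiv:math/0203114 — 2 statements merged into one kernel-verified Lean document; each statement's English description precedes it below -/
import Mathlib

section
/- Let f_i = c_i t^{a_i}, 0 ≤ i ≤ n, be n+1 monomials in n variables over the field k, and let 0 ≤ i < j ≤ n. Then the symbol is multiplicatively skew-symmetric: the symbol of the collection obtained by interchanging the monomials in positions i and j (i.e. swapping both the coefficients c_i, c_j and the exponent rows a_i, a_j) is the multiplicative inverse of the original symbol: [f_0,…,f_j,…,f_i,…,f_n] = [f_0,…,f_i,…,f_j,…,f_n]^{−1}. -/
/-!
Write `Dᵢ = (-1)ⁱ Aᵢ`, so that the symbol is `(-1)^B(A) · ∏ cᵢ^Dᵢ`; the `Dᵢ` are the Laplace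
coefficients of `det [v | A] = ∑ vᵢ Dᵢ`. Permuting the rows of `[v | A]` by `σ` gives
`D(Aσ) = sign σ · (D(A) ∘ σ)`, so the product is raised to the power `sign σ`. The sign
`(-1)^B(A)` only sees `B(A)` mod 2, and mod 2 the minor `A^k_{ij}` depends only on the set of
rows it keeps; as `σ` just permutes the pairs `{i, j}`, `B(Aσ) ≡ B(A)`. So the whole symbol is
raised to the power `sign σ`, and a transposition inverts it.
-/

open Matrix

/-- The strictly increasing embedding `Fin m → Fin (m + 2)` that skips the values
of `i` and `j` (for `i < j`): used to delete rows `i` and `j` of a matrix. -/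
def skip2 {m : ℕ} (i j : Fin (m + 2)) (r : Fin m) : Fin (m + 2) :=
  if r.val < i.val then ⟨r.val, by have := r.isLt; omega⟩
  else if r.val + 1 < j.val then ⟨r.val + 1, by have := r.isLt; omega⟩
  else ⟨r.val + 2, by have := r.isLt; omega⟩

/-- `B(A) = Σ_k Σ_{i<j} a_{ik} a_{jk} A^k_{ij}`, where `A^k_{ij}` is the determinant of
the matrix obtained from `A` by deleting rows `i`, `j` and column `k`. -/
def Bcoef {m : ℕ} (A : Matrix (Fin (m + 2)) (Fin (m + 1)) ℤ) : ℤ :=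
  ∑ c : Fin (m + 1), ∑ i : Fin (m + 2), ∑ j : Fin (m + 2),
    if i < j then A i c * A j c * (A.submatrix (skip2 i j) c.succAbove).det else 0

/-- The symbol `[c₀ t^{a₀}, …, c_{n} t^{a_n}] = (-1)^{B(A)} ∏ᵢ cᵢ^{(-1)ⁱ Aᵢ}` of `n + 1`
monomials in `n` variables (here `n = m + 1`), where `Aᵢ` is the determinant of the matrix
obtained from the exponent matrix `A` by deleting its `i`-th row. -/
def monomialSymbol {k : Type*} [Field k] {m : ℕ}
    (c : Fin (m + 2) → kˣ) (A : Matrix (Fin (m + 2)) (Fin (m + 1)) ℤ) : kˣ :=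
  (-1) ^ Bcoef A *
    ∏ i : Fin (m + 2), c i ^ ((-1 : ℤ) ^ (i : ℕ) * (A.submatrix i.succAbove id).det)


open Equiv

section SignedMinor

variable {R : Type*} [CommRing R] {n : ℕ}

def signedMinor (A : Matrix (Fin (n + 1)) (Fin n) R) (i : Fin (n + 1)) : R :=
  (-1) ^ (i : ℕ) * (A.submatrix i.succAbove id).det

theorem det_of_cons_eq_sum_mul_signedMinor (v : Fin (n + 1) → R)
    (A : Matrix (Fin (n + 1)) (Fin n) R) :
    (Matrix.of fun i => Fin.cons (v i) (A i) : Matrix (Fin (n + 1)) (Fin (n + 1)) R).det =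
      ∑ i, v i * signedMinor A i := by
  rw [det_succ_column_zero]
  refine Finset.sum_congr rfl fun i _ => ?_
  simp only [signedMinor, of_apply, Fin.cons_zero, mul_left_comm (v i), mul_assoc]
  rfl

theorem signedMinor_submatrix_perm (σ : Perm (Fin (n + 1)))
    (A : Matrix (Fin (n + 1)) (Fin n) R) (r : Fin (n + 1)) :
    signedMinor (A.submatrix σ id) r = Perm.sign σ * signedMinor A (σ r) := by
  have key : ∀ w : Fin (n + 1) → R, ∑ i, w (σ i) * signedMinor (A.submatrix σ id) i =
      Perm.sign σ * ∑ i, w i * signedMinor A i := fun w => by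
    rw [← det_of_cons_eq_sum_mul_signedMinor, ← det_of_cons_eq_sum_mul_signedMinor,
      ← det_permute]
    rfl
  simpa [Pi.single_apply, σ.injective.eq_iff] using key (Pi.single (σ r) 1)

theorem prod_zpow_signedMinor_submatrix_perm {G : Type*} [CommGroup G]
    (σ : Perm (Fin (n + 1))) (c : Fin (n + 1) → G) (A : Matrix (Fin (n + 1)) (Fin n) ℤ) :
    ∏ i, c (σ i) ^ signedMinor (A.submatrix σ id) i =
      (∏ i, c i ^ signedMinor A i) ^ (Perm.sign σ : ℤ) := by
  simp_rw [signedMinor_submatrix_perm, Int.cast_id, mul_comm (Perm.sign σ : ℤ), _root_.zpow_mul,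
    Finset.prod_zpow]
  rw [Equiv.prod_comp σ (fun i => c i ^ signedMinor A i)]

end SignedMinor

theorem intCast_units_zmod_two_eq_one (u : ℤˣ) : ((u : ℤ) : ZMod 2) = 1 := by
  rcases Int.units_eq_one_or u with rfl | rfl <;> decide

theorem zpow_eq_zpow_of_sq_eq_one {G : Type*} [Group G] {x : G} (hx : x ^ 2 = 1) {a b : ℤ}
    (h : (a : ZMod 2) = b) : x ^ a = x ^ b := by
  have hx' : x ^ (2 : ℤ) = 1 := by exact_mod_cast hx
  have hab : a % 2 = b % 2 := by exact_mod_cast (ZMod.intCast_eq_intCast_iff' a b 2).1 h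
  rw [zpow_eq_zpow_emod a hx', zpow_eq_zpow_emod b hx', hab]

theorem exists_perm_comp_eq {ι β : Type*} {f g : ι → β} (hf : Function.Injective f)
    (hg : Function.Injective g) (h : Set.range f = Set.range g) :
    ∃ τ : Perm ι, f ∘ τ = g :=
  ⟨(ofInjective g hg).trans ((setCongr h.symm).trans (ofInjective f hf).symm),
    funext fun _ => apply_ofInjective_symm hf _⟩

theorem intCast_det_submatrix_eq_of_range_eq {n : ℕ} {I J : Type*} (M : Matrix I J ℤ)
    (e : Fin n → J) {f g : Fin n → I} (hf : Function.Injective f) (hg : Function.Injective g)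
    (h : Set.range f = Set.range g) :
    ((M.submatrix f e).det : ZMod 2) = (M.submatrix g e).det := by
  obtain ⟨τ, rfl⟩ := exists_perm_comp_eq hf hg h
  have : M.submatrix (f ∘ τ) e = (M.submatrix f e).submatrix τ id := rfl
  rw [this, det_permute]
  push_cast [intCast_units_zmod_two_eq_one]
  ring

theorem min_max_apply_min_max {α β : Type*} [LinearOrder α] [LinearOrder β] {f : α → β}
    {g : β → α} (hgf : ∀ x, g (f x) = x) {a b : α} (hab : a ≤ b) :
    (min (g (min (f a) (f b))) (g (max (f a) (f b))),
      max (g (min (f a) (f b))) (g (max (f a) (f b)))) = (a, b) := by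
  rcases le_total (f a) (f b) with h | h <;> simp [h, hgf, hab]

section Bcoef

variable {m : ℕ}

theorem skip2_injective (i j : Fin (m + 2)) : Function.Injective (skip2 i j) := by
  intro a b hab
  simp only [skip2] at hab
  apply Fin.ext
  split_ifs at hab <;> simp only [Fin.mk.injEq] at hab <;> omega

theorem range_skip2 {i j : Fin (m + 2)} (h : i < j) : Set.range (skip2 i j) = {i, j}ᶜ := by
  have hij : (i : ℕ) < j := h
  ext x
  simp only [Set.mem_range, Set.mem_compl_iff, Set.mem_insert_iff, Set.mem_singleton_iff, not_or]
  constructor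
  · rintro ⟨r, rfl⟩
    have := r.isLt
    simp only [skip2]
    split_ifs <;> simp only [Fin.ext_iff] <;> omega
  · rintro ⟨hi, hj⟩
    rw [Fin.ext_iff] at hi hj
    have := x.isLt
    refine ⟨⟨if (x : ℕ) < i then x else if (x : ℕ) < j then x - 1 else x - 2,
      by split_ifs <;> omega⟩, ?_⟩
    simp only [skip2, Fin.ext_iff]
    split_ifs <;> simp only at * <;> omega

theorem Bcoef_eq_sum_pairs (A : Matrix (Fin (m + 2)) (Fin (m + 1)) ℤ) :
    Bcoef A = ∑ c, ∑ p ∈ Finset.univ.filter (fun p : Fin (m + 2) × Fin (m + 2) => p.1 < p.2),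
      A p.1 c * A p.2 c * (A.submatrix (skip2 p.1 p.2) c.succAbove).det := by
  simp only [Bcoef, Finset.sum_filter, ← Finset.univ_product_univ, Finset.sum_product]

theorem intCast_pair_term_submatrix_perm (σ : Perm (Fin (m + 2)))
    (A : Matrix (Fin (m + 2)) (Fin (m + 1)) ℤ) (c : Fin (m + 1)) {a b : Fin (m + 2)}
    (hab : a < b) :
    ((A (σ a) c * A (σ b) c * (A.submatrix (σ ∘ skip2 a b) c.succAbove).det : ℤ) : ZMod 2) =
      ((A (min (σ a) (σ b)) c * A (max (σ a) (σ b)) c *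
        (A.submatrix (skip2 (min (σ a) (σ b)) (max (σ a) (σ b))) c.succAbove).det : ℤ) :
        ZMod 2) := by
  have hlt : min (σ a) (σ b) < max (σ a) (σ b) := min_lt_max.2 (σ.injective.ne hab.ne)
  have hpair : ({min (σ a) (σ b), max (σ a) (σ b)} : Set _) = {σ a, σ b} := by
    rcases le_total (σ a) (σ b) with h | h
    · rw [min_eq_left h, max_eq_right h]
    · rw [min_eq_right h, max_eq_left h, Set.pair_comm]
  have hrange : Set.range (σ ∘ skip2 a b) =
      Set.range (skip2 (min (σ a) (σ b)) (max (σ a) (σ b))) := by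
    rw [Set.range_comp, range_skip2 hab, Set.image_compl_eq σ.bijective, Set.image_pair,
      range_skip2 hlt, hpair]
  push_cast [intCast_det_submatrix_eq_of_range_eq A c.succAbove
    (σ.injective.comp (skip2_injective a b)) (skip2_injective _ _) hrange]
  rcases le_total (σ a) (σ b) with h | h
  · simp only [min_eq_left h, max_eq_right h]
  · simp only [min_eq_right h, max_eq_left h, mul_comm (A (σ a) c : ZMod 2)]

theorem intCast_Bcoef_submatrix_perm (σ : Perm (Fin (m + 2)))
    (A : Matrix (Fin (m + 2)) (Fin (m + 1)) ℤ) :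
    (Bcoef (A.submatrix σ id) : ZMod 2) = Bcoef A := by
  simp only [Bcoef_eq_sum_pairs, Int.cast_sum]
  refine Finset.sum_congr rfl fun c _ => ?_
  refine Finset.sum_nbij' (fun p => (min (σ p.1) (σ p.2), max (σ p.1) (σ p.2)))
    (fun p => (min (σ.symm p.1) (σ.symm p.2), max (σ.symm p.1) (σ.symm p.2)))
    ?_ ?_ ?_ ?_ ?_ <;> simp only [Finset.mem_filter, Finset.mem_univ, true_and,
      Prod.forall]
  · exact fun a b hab => min_lt_max.2 (σ.injective.ne hab.ne)
  · exact fun a b hab => min_lt_max.2 (σ.symm.injective.ne hab.ne)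
  · exact fun a b hab => min_max_apply_min_max σ.symm_apply_apply hab.le
  · exact fun a b hab => min_max_apply_min_max σ.apply_symm_apply hab.le
  · exact fun a b hab => intCast_pair_term_submatrix_perm σ A c hab

end Bcoef

theorem monomialSymbol_perm {k : Type*} [Field k] {m : ℕ} (σ : Perm (Fin (m + 2)))
    (c : Fin (m + 2) → kˣ) (A : Matrix (Fin (m + 2)) (Fin (m + 1)) ℤ) :
    monomialSymbol (c ∘ σ) (A.submatrix σ id) = monomialSymbol c A ^ (Perm.sign σ : ℤ) := by
  have hsign : (-1 : kˣ) ^ Bcoef (A.submatrix σ id) =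
      ((-1 : kˣ) ^ Bcoef A) ^ (Perm.sign σ : ℤ) := by
    rw [← _root_.zpow_mul]
    refine zpow_eq_zpow_of_sq_eq_one (by simp) ?_
    push_cast [intCast_Bcoef_submatrix_perm, intCast_units_zmod_two_eq_one]
    ring
  rw [monomialSymbol, monomialSymbol, mul_zpow, hsign]
  exact congrArg _ (prod_zpow_signedMinor_submatrix_perm σ c A)

/-- Multiplicative skew-symmetry of the symbol of monomials: interchanging the monomials
in positions `i < j` (swapping both the coefficients and the exponent rows) inverts the
symbol: `[f₀,…,fⱼ,…,fᵢ,…,fₙ] = [f₀,…,fᵢ,…,fⱼ,…,fₙ]⁻¹`. -/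
theorem monomialSymbol_swap {k : Type*} [Field k] {m : ℕ}
    (c : Fin (m + 2) → kˣ) (A : Matrix (Fin (m + 2)) (Fin (m + 1)) ℤ)
    (i j : Fin (m + 2)) (hij : i < j) :
    monomialSymbol (c ∘ Equiv.swap i j) (A.submatrix (Equiv.swap i j) id) =
      (monomialSymbol c A)⁻¹ := by
  rw [monomialSymbol_perm, Perm.sign_swap hij.ne, Units.val_neg, Units.val_one, _root_.zpow_neg_one]
end

section
/- Let A be an (n+1)×n integer matrix and let Q be an n×n integer matrix with det Q = 1 or det Q = −1 (i.e. Q ∈ GL(n,ℤ)). Then B is invariant modulo 2 under the corresponding non-degenerate transformation of the rows: B(A·Q) ≡ B(A) (mod 2), where A·Q is the matrix whose i-th row is a_i Q. -/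
open Matrix

lemma skip2_val {m : ℕ} (i j : Fin (m + 2)) (r : Fin m) :
    (skip2 i j r).val =
      if r.val < i.val then r.val else if r.val + 1 < j.val then r.val + 1 else r.val + 2 := by
  unfold skip2; split_ifs <;> rfl

lemma val_succAbove {n : ℕ} (i : Fin (n + 1)) (p : Fin n) :
    (i.succAbove p).val = if p.val < i.val then p.val else p.val + 1 := by
  rcases lt_or_ge (Fin.castSucc p) i with h | h
  · rw [Fin.succAbove_of_castSucc_lt _ _ h]
    have : p.val < i.val := h
    simp [this]
  · rw [Fin.succAbove_of_le_castSucc _ _ h]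
    have : ¬ p.val < i.val := by
      have := (Fin.le_def.mp h); simp at this ⊢; omega
    simp [this]

lemma succAbove_succAbove_lt {m : ℕ} (i : Fin (m + 2)) (r : Fin (m + 1)) (s : Fin m)
    (hlt : i < i.succAbove r) :
    i.succAbove (r.succAbove s) = skip2 i (i.succAbove r) s := by
  apply Fin.ext
  have h1 := val_succAbove i (r.succAbove s)
  have h2 := val_succAbove r s
  have h3 := val_succAbove i r
  rw [Fin.lt_def, h3] at hlt
  rw [h1, h2, skip2_val, h3]
  split_ifs at hlt ⊢ <;> omega

lemma succAbove_succAbove_gt {m : ℕ} (i : Fin (m + 2)) (r : Fin (m + 1)) (s : Fin m)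
    (hlt : i.succAbove r < i) :
    i.succAbove (r.succAbove s) = skip2 (i.succAbove r) i s := by
  apply Fin.ext
  have h1 := val_succAbove i (r.succAbove s)
  have h2 := val_succAbove r s
  have h3 := val_succAbove i r
  rw [Fin.lt_def, h3] at hlt
  rw [h1, h2, skip2_val, h3]
  split_ifs at hlt ⊢ <;> omega

abbrev F2 := ZMod 2

lemma F2.neg_one : (-1 : F2) = 1 := by decide
lemma F2.cases (x : F2) : x = 0 ∨ x = 1 := by revert x; decide

def mnr {m : ℕ} (A : Matrix (Fin (m + 2)) (Fin (m + 1)) F2) (i j : Fin (m + 2))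
    (c : Fin (m + 1)) : F2 :=
  (A.submatrix (skip2 i j) c.succAbove).det

def msym {m : ℕ} (A : Matrix (Fin (m + 2)) (Fin (m + 1)) F2) (i j : Fin (m + 2))
    (c : Fin (m + 1)) : F2 :=
  if i < j then mnr A i j c else if j < i then mnr A j i c else 0

def B2 {m : ℕ} (A : Matrix (Fin (m + 2)) (Fin (m + 1)) F2) : F2 :=
  ∑ c : Fin (m + 1), ∑ i : Fin (m + 2), ∑ j : Fin (m + 2),
    if i < j then A i c * A j c * mnr A i j c else 0

lemma row_expand {m : ℕ} (A : Matrix (Fin (m + 2)) (Fin (m + 1)) F2) (q : Fin (m + 1))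
    (i : Fin (m + 2)) :
    ∑ j, A j q * msym A i j q = (A.submatrix i.succAbove id).det := by
  rw [Fin.sum_univ_succAbove _ i]
  have h0 : msym A i i q = 0 := by simp [msym]
  rw [h0, mul_zero, zero_add, det_succ_column (A.submatrix i.succAbove id) q]
  refine Finset.sum_congr rfl fun r _ => ?_
  have hpow : ((-1 : F2)) ^ ((r : ℕ) + (q : ℕ)) = 1 := by rw [F2.neg_one, one_pow]
  rw [hpow, one_mul, submatrix_apply, submatrix_submatrix, id_eq]
  congr 1
  rcases lt_or_gt_of_ne (Fin.succAbove_ne i r).symm with h | h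
  · have : msym A i (i.succAbove r) q = mnr A i (i.succAbove r) q := by
      simp [msym, h]
    rw [this, mnr]
    congr 1
    ext s t
    rw [submatrix_apply, submatrix_apply, Function.comp_apply,
      succAbove_succAbove_lt i r s h, Function.comp_apply, id_eq]
  · have : msym A i (i.succAbove r) q = mnr A (i.succAbove r) i q := by
      simp [msym, h, not_lt_of_gt h]
    rw [this, mnr]
    congr 1
    ext s t
    rw [submatrix_apply, submatrix_apply, Function.comp_apply,
      succAbove_succAbove_gt i r s h, Function.comp_apply, id_eq]

lemma col_sum_zero {m : ℕ} (A : Matrix (Fin (m + 2)) (Fin (m + 1)) F2) (p : Fin (m + 1)) :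
    ∑ i, A i p * (A.submatrix i.succAbove id).det = 0 := by
  set E : Matrix (Fin (m + 2)) (Fin (m + 2)) F2 :=
    Matrix.of fun i c => Fin.cases (A i p) (fun c' => A i c') c with hE
  have hdet : E.det = 0 := by
    refine det_zero_of_column_eq (i := 0) (j := p.succ) (Fin.succ_ne_zero p).symm fun k => ?_
    simp [hE]
  rw [det_succ_column_zero] at hdet
  rw [← hdet]
  refine Finset.sum_congr rfl fun i _ => ?_
  have hpow : ((-1 : F2)) ^ (i : ℕ) = 1 := by rw [F2.neg_one, one_pow]
  rw [hpow, one_mul]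
  have h1 : E i 0 = A i p := by simp [hE]
  have h2 : E.submatrix i.succAbove Fin.succ = A.submatrix i.succAbove id := by
    ext r s; simp [hE]
  rw [h1, h2]

lemma sum_pairs {M : Type*} [AddCommMonoid M] {n : ℕ} (g : Fin n → Fin n → M)
    (hdiag : ∀ i, g i i = 0) :
    ∑ i, ∑ j, g i j = ∑ i, ∑ j, if i < j then g i j + g j i else 0 := by
  have key : ∀ i j : Fin n, g i j = (if i < j then g i j else 0) + (if j < i then g i j else 0) := by
    intro i j
    rcases lt_trichotomy i j with h | h | h
    · simp [h, not_lt_of_gt h]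
    · subst h; simp [hdiag]
    · simp [h, not_lt_of_gt h]
  calc ∑ i, ∑ j, g i j
      = ∑ i, ∑ j, ((if i < j then g i j else 0) + (if j < i then g i j else 0)) := by
        simp_rw [← key]
    _ = (∑ i, ∑ j, if i < j then g i j else 0) + ∑ i, ∑ j, if j < i then g i j else 0 := by
        simp [Finset.sum_add_distrib]
    _ = (∑ i, ∑ j, if i < j then g i j else 0) + ∑ j, ∑ i, if j < i then g i j else 0 := by
        congr 1
        exact Finset.sum_comm
    _ = ∑ i, ∑ j, if i < j then g i j + g j i else 0 := by
        rw [← Finset.sum_add_distrib]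
        refine Finset.sum_congr rfl fun i _ => ?_
        rw [← Finset.sum_add_distrib]
        refine Finset.sum_congr rfl fun j _ => ?_
        split <;> simp

lemma S_zero {m : ℕ} (A : Matrix (Fin (m + 2)) (Fin (m + 1)) F2) (p q : Fin (m + 1)) :
    ∑ i, ∑ j, (if i < j then (A i q * A j p + A i p * A j q) * mnr A i j q else 0) = 0 := by
  have hdiag : ∀ i, A i p * A i q * msym A i i q = 0 := by
    intro i; simp [msym]
  have key : ∑ i, ∑ j, A i p * A j q * msym A i j q = 0 := by
    calc ∑ i, ∑ j, A i p * A j q * msym A i j q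
        = ∑ i, A i p * ∑ j, A j q * msym A i j q := by
          simp [Finset.mul_sum, mul_assoc]
      _ = ∑ i, A i p * (A.submatrix i.succAbove id).det := by
          simp_rw [row_expand]
      _ = 0 := col_sum_zero A p
  rw [sum_pairs (fun i j => A i p * A j q * msym A i j q) hdiag] at key
  refine Eq.trans ?_ key
  refine Finset.sum_congr rfl fun i _ => Finset.sum_congr rfl fun j _ => ?_
  split
  · next h =>
    have h1 : msym A i j q = mnr A i j q := by simp [msym, h]
    have h2 : msym A j i q = mnr A i j q := by simp [msym, h, not_lt_of_gt h]
    rw [h1, h2]; ring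
  · rfl

lemma mnr_upd_q {m : ℕ} {A A' : Matrix (Fin (m + 2)) (Fin (m + 1)) F2} {q : Fin (m + 1)}
    (hne : ∀ i c, c ≠ q → A' i c = A i c) (i j : Fin (m + 2)) :
    mnr A' i j q = mnr A i j q := by
  unfold mnr
  congr 1
  ext r s
  exact hne _ _ (Fin.succAbove_ne q s)

lemma mnr_upd_other {m : ℕ} {A A' : Matrix (Fin (m + 2)) (Fin (m + 1)) F2} {p q c : Fin (m + 1)}
    (hpq : p ≠ q) (hq : ∀ i, A' i q = A i q + A i p) (hne : ∀ i c', c' ≠ q → A' i c' = A i c')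
    (hcp : c ≠ p) (hcq : c ≠ q) (i j : Fin (m + 2)) :
    mnr A' i j c = mnr A i j c := by
  obtain ⟨s0, hs0⟩ := Fin.exists_succAbove_eq (Ne.symm hcq)
  obtain ⟨s1, hs1⟩ := Fin.exists_succAbove_eq (Ne.symm hcp)
  set M := A.submatrix (skip2 i j) c.succAbove with hM
  have hsub : A'.submatrix (skip2 i j) c.succAbove
      = M.updateCol s0 ((fun r => M r s0) + fun r => M r s1) := by
    ext r s
    rw [updateCol_apply]
    by_cases h : s = s0
    · rw [if_pos h]
      show A' (skip2 i j r) (c.succAbove s) = _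
      rw [h, hs0, hq]
      simp only [hM, Pi.add_apply, submatrix_apply, hs0, hs1]
    · rw [if_neg h]
      have hsq : c.succAbove s ≠ q := by
        rw [← hs0]; exact fun hc => h (Fin.succAbove_right_injective hc)
      exact hne _ _ hsq
  unfold mnr
  rw [hsub, det_updateCol_add, updateCol_eq_self]
  have h01 : s1 ≠ s0 := by
    intro hc
    apply hpq
    rw [← hs1, hc, hs0]
  rw [det_updateCol_eq_zero h01, add_zero]

lemma mnr_upd_p {m : ℕ} {A A' : Matrix (Fin (m + 2)) (Fin (m + 1)) F2} {p q : Fin (m + 1)}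
    (hpq : p ≠ q) (hq : ∀ i, A' i q = A i q + A i p) (hne : ∀ i c', c' ≠ q → A' i c' = A i c')
    (i j : Fin (m + 2)) :
    mnr A' i j p = mnr A i j p + mnr A i j q := by
  obtain ⟨s0, hs0⟩ := Fin.exists_succAbove_eq (Ne.symm hpq)
  set M := A.submatrix (skip2 i j) p.succAbove with hM
  set w : Fin m → F2 := fun r => A (skip2 i j r) p with hw
  have hsub : A'.submatrix (skip2 i j) p.succAbove
      = M.updateCol s0 ((fun r => M r s0) + w) := by
    ext r s
    rw [updateCol_apply]
    by_cases h : s = s0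
    · rw [if_pos h]
      show A' (skip2 i j r) (p.succAbove s) = _
      rw [h, hs0, hq]
      simp only [hM, hw, Pi.add_apply, submatrix_apply, hs0]
    · rw [if_neg h]
      have hsq : p.succAbove s ≠ q := by
        rw [← hs0]; exact fun hc => h (Fin.succAbove_right_injective hc)
      exact hne _ _ hsq
  unfold mnr
  rw [hsub, det_updateCol_add, updateCol_eq_self]
  congr 1
  -- remaining: (M.updateCol s0 w).det = det of the `q`-minor
  set τ : Fin m → Fin (m + 1) := fun s => if s = s0 then p else p.succAbove s with hτ
  have hτq : ∀ s, τ s ≠ q := by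
    intro s
    by_cases h : s = s0
    · simpa [hτ, h] using hpq
    · simp only [hτ, h, if_false]
      rw [← hs0]
      exact fun hc => h (Fin.succAbove_right_injective hc)
  have hτinj : Function.Injective τ := by
    intro a b hab
    by_cases ha : a = s0 <;> by_cases hb : b = s0
    · rw [ha, hb]
    · exfalso
      rw [hτ] at hab; simp only [ha, hb, if_true, if_false] at hab
      exact (Fin.succAbove_ne p b) hab.symm
    · exfalso
      rw [hτ] at hab; simp only [ha, hb, if_true, if_false] at hab
      exact (Fin.succAbove_ne p a) hab
    · rw [hτ] at hab; simp only [ha, hb, if_false] at hab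
      exact Fin.succAbove_right_injective hab
  choose σ0 hσ0 using fun s => Fin.exists_succAbove_eq (hτq s)
  have hσinj : Function.Injective σ0 := fun a b hab =>
    hτinj (by rw [← hσ0 a, ← hσ0 b, hab])
  let σ : Equiv.Perm (Fin m) := Equiv.ofBijective σ0 (Finite.injective_iff_bijective.mp hσinj)
  have hMN : M.updateCol s0 w = (A.submatrix (skip2 i j) q.succAbove).submatrix id σ := by
    ext r s
    rw [submatrix_apply, submatrix_apply, id_eq]
    have hσs : q.succAbove (σ s) = τ s := hσ0 s
    rw [hσs, updateCol_apply, hτ]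
    by_cases h : s = s0 <;> simp [h, hw, hM]
  rw [hMN, det_permute']
  rcases Int.units_eq_one_or (Equiv.Perm.sign σ) with h | h <;> rw [h] <;>
    simp [F2.neg_one]

lemma mul_transvection_rect {l n : Type*} [Fintype n] [DecidableEq n]
    (M : Matrix l n F2) (p q : n) (a : l) (b : n) :
    (M * transvection p q (1 : F2)) a b = M a b + if b = q then M a p else 0 := by
  have hstd : (M * Matrix.single p q (1 : F2)) a b = if b = q then M a p else 0 := by
    by_cases h : b = q
    · subst h
      simp [mul_apply, Matrix.single, Matrix.of_apply, eq_comm]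
    · simp [mul_apply, Matrix.single, Matrix.of_apply, h, Ne.symm h]
  rw [transvection, Matrix.mul_add, Matrix.mul_one, Matrix.add_apply, hstd]


lemma B2_transvection {m : ℕ} (A : Matrix (Fin (m + 2)) (Fin (m + 1)) F2)
    (p q : Fin (m + 1)) (hpq : p ≠ q) :
    B2 (A * transvection p q (1 : F2)) = B2 A := by
  set A' := A * transvection p q (1 : F2) with hA'
  have hq : ∀ i, A' i q = A i q + A i p := by
    intro i
    rw [hA', mul_transvection_rect]
    simp
  have hne : ∀ i c, c ≠ q → A' i c = A i c := by
    intro i c hc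
    rw [hA', mul_transvection_rect]
    simp [hc]
  have expand : ∀ (c : Fin (m + 1)) (i j : Fin (m + 2)),
      (if i < j then A' i c * A' j c * mnr A' i j c else 0)
      = (if i < j then A i c * A j c * mnr A i j c else 0)
        + ((if c = q then (if i < j then A i q * A j p * mnr A i j q
              + A i p * A j q * mnr A i j q + A i p * A j p * mnr A i j q else 0) else 0)
          + (if c = p then (if i < j then A i p * A j p * mnr A i j q else 0) else 0)) := by
    intro c i j
    by_cases hij : i < j
    · simp only [hij, if_true]
      by_cases hcq : c = q
      · subst hcq
        rw [hq, hq, mnr_upd_q hne, if_pos rfl, if_neg (Ne.symm hpq)]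
        ring
      · by_cases hcp : c = p
        · subst hcp
          rw [hne i c hpq, hne j c hpq, mnr_upd_p hpq hq hne, if_neg hcq, if_pos rfl]
          ring
        · rw [hne i c hcq, hne j c hcq, mnr_upd_other hpq hq hne hcp hcq,
            if_neg hcq, if_neg hcp]
          ring
    · simp [hij]
  have collapse : ∀ (b : Fin (m + 1)) (f : Fin (m + 2) → Fin (m + 2) → F2),
      (∑ c : Fin (m + 1), ∑ i : Fin (m + 2), ∑ j : Fin (m + 2), (if c = b then f i j else 0))
      = ∑ i : Fin (m + 2), ∑ j : Fin (m + 2), f i j := by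
    intro b f
    have hstep : ∀ c : Fin (m + 1),
        (∑ i : Fin (m + 2), ∑ j : Fin (m + 2), (if c = b then f i j else 0))
        = if c = b then (∑ i : Fin (m + 2), ∑ j : Fin (m + 2), f i j) else 0 := by
      intro c; by_cases h : c = b <;> simp [h]
    rw [Finset.sum_congr rfl fun c _ => hstep c, Finset.sum_ite_eq']
    simp
  have corrsum : (∑ c : Fin (m + 1), ∑ i : Fin (m + 2), ∑ j : Fin (m + 2),
        (if c = q then (if i < j then A i q * A j p * mnr A i j q
          + A i p * A j q * mnr A i j q + A i p * A j p * mnr A i j q else 0) else 0))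
      + (∑ c : Fin (m + 1), ∑ i : Fin (m + 2), ∑ j : Fin (m + 2),
        (if c = p then (if i < j then A i p * A j p * mnr A i j q else 0) else 0)) = 0 := by
    rw [collapse q, collapse p, ← Finset.sum_add_distrib]
    refine Eq.trans ?_ (S_zero A p q)
    refine Finset.sum_congr rfl fun i _ => ?_
    rw [← Finset.sum_add_distrib]
    refine Finset.sum_congr rfl fun j _ => ?_
    by_cases hij : i < j
    · simp only [hij, if_true]
      have h2 : (2 : F2) = 0 := by decide
      linear_combination (A i p * A j p * mnr A i j q) * h2
    · simp [hij]
  show (∑ c : Fin (m + 1), ∑ i : Fin (m + 2), ∑ j : Fin (m + 2),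
      if i < j then A' i c * A' j c * mnr A' i j c else 0) = B2 A
  rw [Finset.sum_congr rfl fun c _ => Finset.sum_congr rfl fun i _ =>
    Finset.sum_congr rfl fun j _ => expand c i j]
  simp only [Finset.sum_add_distrib]
  rw [corrsum, add_zero]
  rfl

lemma B2_mul_right {m : ℕ} (Q : Matrix (Fin (m + 1)) (Fin (m + 1)) F2) (hQ : Q.det ≠ 0)
    (A : Matrix (Fin (m + 2)) (Fin (m + 1)) F2) : B2 (A * Q) = B2 A := by
  revert A
  refine Matrix.diagonal_transvection_induction_of_det_ne_zero
    (fun N => ∀ A : Matrix (Fin (m + 2)) (Fin (m + 1)) F2, B2 (A * N) = B2 A) Q hQ ?_ ?_ ?_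
  · intro D hD A
    have h1 : ∀ x, D x = 1 := by
      intro x
      rcases F2.cases (D x) with h | h
      · exact absurd (by rw [det_diagonal]; exact Finset.prod_eq_zero (Finset.mem_univ x) h) hD
      · exact h
    have hD1 : Matrix.diagonal D = 1 := by
      rw [show D = fun _ => (1 : F2) from funext h1]
      exact Matrix.diagonal_one
    rw [hD1, Matrix.mul_one]
  · intro t A
    rcases t with ⟨i, j, hij, c⟩
    rw [Matrix.TransvectionStruct.toMatrix_mk]
    rcases F2.cases c with h | h
    · rw [h, show transvection i j (0 : F2) = 1 by simp [transvection], Matrix.mul_one]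
    · rw [h]
      exact B2_transvection A i j hij
  · intro M N _ _ hM hN A
    rw [← Matrix.mul_assoc, hN, hM]

/-- `B` is invariant modulo `2` under non-degenerate monomial transformations: for
`Q ∈ GL(n, ℤ)` (i.e. `det Q = ±1`) one has `B(A·Q) ≡ B(A) (mod 2)`. -/
theorem Bcoef_mul_right_mod_two {m : ℕ} (A : Matrix (Fin (m + 2)) (Fin (m + 1)) ℤ)
    (Q : Matrix (Fin (m + 1)) (Fin (m + 1)) ℤ) (hQ : Q.det = 1 ∨ Q.det = -1) :
    Bcoef (A * Q) ≡ Bcoef A [ZMOD 2] := by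
  have castB : ∀ A' : Matrix (Fin (m + 2)) (Fin (m + 1)) ℤ,
      ((Bcoef A' : ℤ) : ZMod 2) = B2 (A'.map (Int.cast : ℤ → ZMod 2)) := by
    intro A'
    unfold Bcoef B2 mnr
    rw [Int.cast_sum]
    refine Finset.sum_congr rfl fun c _ => ?_
    rw [Int.cast_sum]
    refine Finset.sum_congr rfl fun i _ => ?_
    rw [Int.cast_sum]
    refine Finset.sum_congr rfl fun j _ => ?_
    rw [apply_ite (Int.cast : ℤ → ZMod 2)]
    split
    · rw [Int.cast_mul, Int.cast_mul]
      congr 1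
      rw [Matrix.submatrix_map]
      exact RingHom.map_det (Int.castRingHom (ZMod 2)) _
    · exact Int.cast_zero
  refine (ZMod.intCast_eq_intCast_iff _ _ 2).mp ?_
  rw [castB, castB]
  have hmap : (A * Q).map (Int.cast : ℤ → ZMod 2)
      = A.map (Int.cast : ℤ → ZMod 2) * Q.map (Int.cast : ℤ → ZMod 2) :=
    Matrix.map_mul (f := Int.castRingHom (ZMod 2))
  rw [hmap]
  apply B2_mul_right
  have hdet : (Q.map (Int.cast : ℤ → ZMod 2)).det = ((Q.det : ℤ) : ZMod 2) :=
    (RingHom.map_det (Int.castRingHom (ZMod 2)) Q).symm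
  rw [hdet]
  rcases hQ with h | h <;> rw [h] <;> decide
end
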